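/- arXiv:1511.09321 — 2 statements merged into one kernel-verified Lean document; each statement's English description precedes it below -/
import Mathlib

section
/- Let n ≥ 2 and let s = (s_1, ..., s_n) be a sequence of positive integers with s_i ≥ s_{i+1} for i = 1, ..., n-1 and s_n ≤ n-1. If the sequence s' = (s_1 - 1, s_2 - 1, ..., s_{s_n} - 1, s_{s_n+1}, ..., s_{n-1}) of length n-1 (obtained by deleting the last term s_n and subtracting 1 from each of the first s_n terms) is connected and graphic, then s is connected and graphic. -/
/-- A sequence `s` of length `n` is graphic if it is the degree sequence of a
finite simple graph on `n` vertices. -/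
def Graphic (n : ℕ) (s : Fin n → ℕ) : Prop :=
  ∃ G : SimpleGraph (Fin n), ∃ _ : DecidableRel G.Adj, ∀ i, G.degree i = s i

/-- A sequence `s` is connected and graphic if it is the degree sequence of a
connected finite simple graph on `n` vertices. -/
def ConnectedGraphic (n : ℕ) (s : Fin n → ℕ) : Prop :=
  ∃ G : SimpleGraph (Fin n), ∃ _ : DecidableRel G.Adj,
    G.Connected ∧ ∀ i, G.degree i = s i

/-! Take a connected graph realising `s'` on the first `n - 1` vertices and join a new vertex to
the first `s_n` of them. This raises exactly the degrees that were lowered in passing from `s`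
to `s'`, the new vertex gets degree `s_n`, and since `s_n ≥ 1` it is attached to the connected
old graph. -/

open Finset

namespace SimpleGraph

variable {V : Type*}

def addVertex (G : SimpleGraph V) (S : Finset V) : SimpleGraph (Option V) where
  Adj
    | some a, some b => G.Adj a b
    | none, some b => b ∈ S
    | some a, none => a ∈ S
    | none, none => False
  symm := ⟨by
    rintro (_ | a) (_ | b) h
    exacts [h, h, h, h.symm]⟩
  loopless := ⟨by
    rintro (_ | a) h
    exacts [h, G.loopless.irrefl a h]⟩

variable (G : SimpleGraph V) (S : Finset V)

@[simp] theorem addVertex_adj_some_some {a b : V} :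
    (G.addVertex S).Adj (some a) (some b) ↔ G.Adj a b :=
  Iff.rfl

@[simp] theorem addVertex_adj_none_some {b : V} : (G.addVertex S).Adj none (some b) ↔ b ∈ S :=
  Iff.rfl

@[simp] theorem addVertex_adj_some_none {a : V} : (G.addVertex S).Adj (some a) none ↔ a ∈ S :=
  Iff.rfl

@[simp] theorem not_addVertex_adj_none_none : ¬(G.addVertex S).Adj none none :=
  id

instance [DecidableEq V] [DecidableRel G.Adj] : DecidableRel (G.addVertex S).Adj
  | some a, some b => inferInstanceAs (Decidable (G.Adj a b))
  | none, some b => inferInstanceAs (Decidable (b ∈ S))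
  | some a, none => inferInstanceAs (Decidable (a ∈ S))
  | none, none => inferInstanceAs (Decidable False)

section Degree

variable [Fintype V] [DecidableEq V] [DecidableRel G.Adj]

theorem degree_addVertex_none : (G.addVertex S).degree none = #S := by
  rw [← Nat.cast_id ((G.addVertex S).degree none), degree_eq_sum_if_adj, Fintype.sum_option]
  simp

theorem degree_addVertex_some (v : V) :
    (G.addVertex S).degree (some v) = G.degree v + if v ∈ S then 1 else 0 := by
  rw [← Nat.cast_id ((G.addVertex S).degree _), degree_eq_sum_if_adj, Fintype.sum_option,
    ← Nat.cast_id (G.degree v), degree_eq_sum_if_adj, add_comm]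
  simp

end Degree

theorem Preconnected.connected_addVertex {G : SimpleGraph V} (hG : G.Preconnected)
    {S : Finset V} (hS : S.Nonempty) : (G.addVertex S).Connected := by
  obtain ⟨w, hw⟩ := hS
  have reachable_none : ∀ x, (G.addVertex S).Reachable x none := by
    rintro (_ | v)
    · rfl
    · exact ((hG v w).map (⟨some, id⟩ : G →g G.addVertex S)).trans (Adj.reachable hw)
  exact (connected_iff _).2 ⟨fun x y => (reachable_none x).trans (reachable_none y).symm, ⟨none⟩⟩

end SimpleGraph

open SimpleGraph in
theorem ConnectedGraphic.snoc {m : ℕ} {d : Fin m → ℕ} (hd : ConnectedGraphic m d)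
    {S : Finset (Fin m)} (hS : S.Nonempty) :
    ConnectedGraphic (m + 1) (Fin.snoc (fun j => d j + if j ∈ S then 1 else 0) #S) := by
  obtain ⟨G, _, hconn, hdeg⟩ := hd
  let e := Iso.comap finSuccEquivLast (G.addVertex S)
  refine ⟨_, Classical.decRel _, e.connected_iff.2 (hconn.preconnected.connected_addVertex hS),
    fun i => ?_⟩
  -- `convert` reconciles the two `Fintype` instances on the neighbour set of `i`.
  calc _ = (G.addVertex S).degree (e i) := by convert (e.degree_eq i).symm
    _ = _ := ?_
  induction i using Fin.lastCases with
  | last => rw [Iso.comap_apply, finSuccEquivLast_last, degree_addVertex_none, Fin.snoc_last]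
  | cast j =>
    rw [Iso.comap_apply, finSuccEquivLast_castSucc, degree_addVertex_some, Fin.snoc_castSucc,
      hdeg]

theorem connected_havel_hakimi_mpr (n : ℕ) (hn : 2 ≤ n) (s : Fin n → ℕ)
    (hpos : ∀ i, 0 < s i)
    (hmin : s ⟨n - 1, by omega⟩ ≤ n - 1)
    (s' : Fin (n - 1) → ℕ)
    (hs' : ∀ j : Fin (n - 1),
      s' j = if j.val + 1 ≤ s ⟨n - 1, by omega⟩
             then s ⟨j.val, by omega⟩ - 1
             else s ⟨j.val, by omega⟩) :
    ConnectedGraphic (n - 1) s' → ConnectedGraphic n s := by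
  intro h
  obtain ⟨m, rfl⟩ : ∃ m, n = m + 1 := ⟨n - 1, by omega⟩
  set k := s (Fin.last m) with hk
  have hkm : k ≤ m := hmin
  let S : Finset (Fin m) := {j | j < k}
  have hS : #S = k := by simpa [S, hkm] using Fin.card_filter_val_lt (n := m) (m := k)
  have hS_nonempty : S.Nonempty := card_pos.1 (hS ▸ hpos _)
  have hsnoc : ConnectedGraphic (m + 1)
      (Fin.snoc (α := fun _ => ℕ) (fun j : Fin m => s' j + if j ∈ S then 1 else 0) #S) :=
    h.snoc hS_nonempty
  convert hsnoc
  funext i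
  induction i using Fin.lastCases with
  | last => simp [hS, hk]
  | cast j =>
    have hj : 0 < s j.castSucc := hpos _
    have hs'j : s' j = if j.val + 1 ≤ k then s j.castSucc - 1 else s j.castSucc := hs' j
    simp only [Fin.snoc_castSucc, hs'j, S, mem_filter_univ]
    split_ifs <;> omega
end

section
/- Let n ≥ 1 and let s = (s_1, ..., s_n) be a sequence of positive integers with s_i ≥ s_{i+1} for i = 1, ..., n-1 and s_1 ≤ n-1. If the sequence s' = (s_2 - 1, s_3 - 1, ..., s_{s_1+1} - 1, s_{s_1+2}, ..., s_n) of length n-1 is graphic and s_1 + s_2 + ... + s_n ≥ 2(n-1), then s is connected and graphic. -/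
open Finset

namespace SimpleGraph

section

variable {V : Type*} {G H : SimpleGraph V}

lemma reachable_le_of_adj_le_reachable (h : G.Adj ≤ H.Reachable) : G.Reachable ≤ H.Reachable :=
  fun u v huv => Relation.reflTransGen_le_of_equivalence_of_le H.reachable_is_equivalence h u v
    ((reachable_iff_reflTransGen u v).1 huv)

lemma Reachable.deleteEdges_of_not_reachable {u v c d : V} (huv : G.Reachable u v)
    (hc : ¬G.Reachable u c) : (G.deleteEdges {s(c, d)}).Reachable u v := by
  classical
  obtain ⟨p⟩ := huv
  refine ⟨p.toDeleteEdges _ fun e he hcd => hc ?_⟩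
  rw [Set.mem_singleton_iff] at hcd
  subst hcd
  exact (p.takeUntil c (p.fst_mem_support_of_mem_edges he)).reachable

lemma degree_eq_ncard_neighborSet (v : V) [Fintype (G.neighborSet v)] :
    G.degree v = (G.neighborSet v).ncard := by
  rw [← card_neighborSet_eq_degree, ← Nat.card_eq_fintype_card, Nat.card_coe_set_eq]

section Fintype

variable [Fintype V] [DecidableRel G.Adj]

lemma IsAcyclic.connected_of_card_le [Nonempty V] (hG : G.IsAcyclic)
    (h : Fintype.card V ≤ #G.edgeFinset + 1) : G.Connected := by
  classical
  obtain ⟨T, hGT, -, hT⟩ := connected_top.exists_isTree_le_of_le_of_isAcyclic le_top hG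
  obtain rfl : G = T := by
    by_contra hne
    have := card_lt_card (edgeFinset_ssubset_edgeFinset.2 (lt_of_le_of_ne hGT hne))
    have := hT.card_edgeFinset
    omega
  exact hT.connected

lemma exists_adj_not_isBridge [Nonempty V] (hG : ¬G.Connected)
    (h : Fintype.card V ≤ #G.edgeFinset + 1) : ∃ a b, G.Adj a b ∧ ¬G.IsBridge s(a, b) := by
  by_contra! hbridge
  exact hG ((isAcyclic_iff_forall_adj_isBridge.2 hbridge).connected_of_card_le h)

end Fintype

section Switch

variable {a b c d : V}

def switch (G : SimpleGraph V) (a b c d : V) : SimpleGraph V :=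
  G.deleteEdges {s(a, b), s(c, d)} ⊔ edge a c ⊔ edge b d

lemma switch_adj {x y : V} : (G.switch a b c d).Adj x y ↔
    (G.Adj x y ∧ s(x, y) ≠ s(a, b) ∧ s(x, y) ≠ s(c, d)) ∨
      ((x = a ∧ y = c ∨ x = c ∧ y = a) ∧ x ≠ y) ∨ ((x = b ∧ y = d ∨ x = d ∧ y = b) ∧ x ≠ y) := by
  simp only [switch, sup_adj, deleteEdges_adj, edge_adj, Set.mem_insert_iff,
    Set.mem_singleton_iff, not_or, ne_eq]
  tauto

lemma switch_swap : G.switch a b c d = G.switch b a d c := by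
  ext x y
  simp only [switch_adj, Sym2.eq_swap (a := b), Sym2.eq_swap (a := d)]
  tauto

lemma switch_comm : G.switch a b c d = G.switch c d a b := by
  ext x y
  simp only [switch_adj]
  tauto

lemma neighborSet_switch_left (hab : G.Adj a b) (hac : a ≠ c) (had : a ≠ d) :
    (G.switch a b c d).neighborSet a = insert c (G.neighborSet a \ {b}) := by
  ext y
  simp only [mem_neighborSet, switch_adj, Set.mem_insert_iff, Set.mem_sdiff,
    Set.mem_singleton_iff, ne_eq, Sym2.eq_iff]
  grind [hab.ne]

lemma neighborSet_switch_of_ne {x : V} (hxa : x ≠ a) (hxb : x ≠ b) (hxc : x ≠ c) (hxd : x ≠ d) :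
    (G.switch a b c d).neighborSet x = G.neighborSet x := by
  ext y
  simp only [mem_neighborSet, switch_adj, ne_eq, Sym2.eq_iff]
  tauto

lemma ncard_neighborSet_switch_left [Finite V] (hab : G.Adj a b) (hac : ¬G.Adj a c)
    (hac' : a ≠ c) (had : a ≠ d) :
    ((G.switch a b c d).neighborSet a).ncard = (G.neighborSet a).ncard := by
  rw [neighborSet_switch_left hab hac' had, Set.ncard_insert_of_notMem (fun h => hac h.1),
    Set.ncard_sdiff_singleton_add_one (show b ∈ G.neighborSet a from hab)]

lemma degree_switch [Fintype V] [DecidableRel G.Adj] [DecidableRel (G.switch a b c d).Adj]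
    (hab : G.Adj a b) (hcd : G.Adj c d) (hac : ¬G.Adj a c) (hbd : ¬G.Adj b d)
    (hac' : a ≠ c) (hbd' : b ≠ d) (x : V) :
    (G.switch a b c d).degree x = G.degree x := by
  have had : a ≠ d := by rintro rfl; exact hac hcd.symm
  have hbc : b ≠ c := by rintro rfl; exact hac hab
  rw [degree_eq_ncard_neighborSet, degree_eq_ncard_neighborSet]
  by_cases hxa : x = a
  · subst hxa; exact ncard_neighborSet_switch_left hab hac hac' had
  by_cases hxb : x = b
  · subst hxb; rw [switch_swap]; exact ncard_neighborSet_switch_left hab.symm hbd hbd' hbc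
  by_cases hxc : x = c
  · subst hxc; rw [switch_comm]
    exact ncard_neighborSet_switch_left hcd (fun h => hac h.symm) hac'.symm hbc.symm
  by_cases hxd : x = d
  · subst hxd; rw [switch_comm, switch_swap]
    exact ncard_neighborSet_switch_left hcd.symm (fun h => hbd h.symm) hbd'.symm had.symm
  rw [neighborSet_switch_of_ne hxa hxb hxc hxd]

lemma switch_adj_left (h : a ≠ c) : (G.switch a b c d).Adj a c :=
  switch_adj.2 (Or.inr (Or.inl ⟨Or.inl ⟨rfl, rfl⟩, h⟩))

lemma switch_adj_right (h : b ≠ d) : (G.switch a b c d).Adj b d :=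
  switch_adj.2 (Or.inr (Or.inr ⟨Or.inl ⟨rfl, rfl⟩, h⟩))

lemma reachable_switch_of_not_isBridge (hab : ¬G.IsBridge s(a, b)) (hac : ¬G.Reachable a c) :
    (G.switch a b c d).Reachable a b := by
  have hdel : (G.deleteEdges {s(a, b)}).Reachable a b := by simpa [isBridge_iff] using hab
  have hle : (G.deleteEdges {s(a, b)}).deleteEdges {s(c, d)} ≤ G.switch a b c d := by
    rw [deleteEdges_deleteEdges, Set.singleton_union]
    exact le_sup_left.trans le_sup_left
  exact (hdel.deleteEdges_of_not_reachable
    fun h => hac (h.mono (deleteEdges_le _))).mono hle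

lemma reachable_lt_switch (hab : G.Adj a b) (hcd : G.Adj c d) (hbridge : ¬G.IsBridge s(a, b))
    (hac : ¬G.Reachable a c) : G.Reachable < (G.switch a b c d).Reachable := by
  have hac' : a ≠ c := by rintro rfl; exact hac .rfl
  have hbd' : b ≠ d := by rintro rfl; exact hac (hab.reachable.trans hcd.symm.reachable)
  have hRab := reachable_switch_of_not_isBridge (d := d) hbridge hac
  refine lt_of_le_of_ne (reachable_le_of_adj_le_reachable fun x y hxy => ?_) fun heq => ?_
  · by_cases hxy_ab : s(x, y) = s(a, b)
    · rcases Sym2.eq_iff.1 hxy_ab with ⟨rfl, rfl⟩ | ⟨rfl, rfl⟩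
      exacts [hRab, hRab.symm]
    by_cases hxy_cd : s(x, y) = s(c, d)
    · have hRcd := (switch_adj_left hac').symm.reachable.trans
        (hRab.trans (switch_adj_right hbd').reachable)
      rcases Sym2.eq_iff.1 hxy_cd with ⟨rfl, rfl⟩ | ⟨rfl, rfl⟩
      exacts [hRcd, hRcd.symm]
    exact (switch_adj.2 (Or.inl ⟨hxy, hxy_ab, hxy_cd⟩)).reachable
  · exact hac (heq ▸ (switch_adj_left hac').reachable)

lemma exists_degree_eq_reachable_lt [Fintype V] [DecidableRel G.Adj] [Nonempty V] (hG : ¬G.Connected) (hdeg : ∀ v, 0 < G.degree v)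
    (h : Fintype.card V ≤ #G.edgeFinset + 1) :
    ∃ H : SimpleGraph V, ∃ _ : DecidableRel H.Adj,
      (∀ v, H.degree v = G.degree v) ∧ G.Reachable < H.Reachable := by
  classical
  obtain ⟨a, b, hab, hbridge⟩ := exists_adj_not_isBridge hG h
  obtain ⟨c, hac⟩ : ∃ c, ¬G.Reachable a c := by
    by_contra! hall
    exact hG ((connected_iff_exists_forall_reachable G).2 ⟨a, hall⟩)
  obtain ⟨d, hcd⟩ := (G.degree_pos_iff_exists_adj c).1 (hdeg c)
  have hbd : ¬G.Reachable b d := fun h => hac (hab.reachable.trans (h.trans hcd.symm.reachable))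
  exact ⟨G.switch a b c d, inferInstance,
    degree_switch hab hcd (fun h => hac h.reachable) (fun h => hbd h.reachable)
      (fun h => hac (h ▸ .rfl)) (fun h => hbd (h ▸ .rfl)),
    reachable_lt_switch hab hcd hbridge hac⟩

end Switch

theorem exists_connected_degree_eq [Fintype V] [Nonempty V] (d : V → ℕ)
    (hd : ∃ G : SimpleGraph V, ∃ _ : DecidableRel G.Adj, ∀ v, G.degree v = d v)
    (hpos : ∀ v, 0 < d v) (hsum : 2 * (Fintype.card V - 1) ≤ ∑ v, d v) :
    ∃ H : SimpleGraph V, ∃ _ : DecidableRel H.Adj, H.Connected ∧ ∀ v, H.degree v = d v := by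
  obtain ⟨H, ⟨_, hH⟩, hmax⟩ := exists_maximalFor_of_wellFoundedGT
    (fun H : SimpleGraph V => ∃ _ : DecidableRel H.Adj, ∀ v, H.degree v = d v) Reachable hd
  refine ⟨H, inferInstance, by_contra fun hconn => ?_, hH⟩
  have hedges : Fintype.card V ≤ #H.edgeFinset + 1 := by
    have hdeg_sum := H.sum_degrees_eq_twice_card_edges
    simp only [hH] at hdeg_sum
    have := Fintype.card_pos (α := V)
    omega
  obtain ⟨H', _, hdeg', hlt⟩ :=
    exists_degree_eq_reachable_lt hconn (fun v => hH v ▸ hpos v) hedges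
  exact hlt.not_ge (hmax ⟨inferInstance, fun v => (hdeg' v).trans (hH v)⟩ hlt.le)

end

section AttachVertex

variable {m : ℕ}

def attachVertex (G : SimpleGraph (Fin m)) (t : ℕ) : SimpleGraph (Fin (m + 1)) where
  Adj x y := Fin.cases (Fin.cases False (fun j => (j : ℕ) < t) y)
    (fun i => Fin.cases ((i : ℕ) < t) (fun j => G.Adj i j) y) x
  symm := ⟨fun x y => by
    cases x using Fin.cases <;> cases y using Fin.cases <;> simp [G.adj_comm]⟩
  loopless := ⟨fun x => by cases x using Fin.cases <;> simp⟩

variable (G : SimpleGraph (Fin m)) (t : ℕ) (i j : Fin m)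

@[simp] lemma attachVertex_adj_zero_succ : (G.attachVertex t).Adj 0 j.succ ↔ (j : ℕ) < t := Iff.rfl

@[simp] lemma attachVertex_adj_succ_zero : (G.attachVertex t).Adj i.succ 0 ↔ (i : ℕ) < t := Iff.rfl

@[simp] lemma attachVertex_adj_succ_succ : (G.attachVertex t).Adj i.succ j.succ ↔ G.Adj i j :=
  Iff.rfl

variable [DecidableRel (G.attachVertex t).Adj]

lemma degree_attachVertex_zero (ht : t ≤ m) : (G.attachVertex t).degree 0 = t := by
  have := degree_eq_sum_if_adj (R := ℕ) (G.attachVertex t) 0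
  rw [Nat.cast_id, Fin.sum_univ_succ] at this
  simp only [attachVertex_adj_zero_succ, SimpleGraph.irrefl, if_false, zero_add, sum_boole,
    Nat.cast_id, Fin.card_filter_val_lt] at this
  omega

lemma degree_attachVertex_succ [DecidableRel G.Adj] :
    (G.attachVertex t).degree j.succ = G.degree j + if (j : ℕ) < t then 1 else 0 := by
  have := degree_eq_sum_if_adj (R := ℕ) (G.attachVertex t) j.succ
  rw [Nat.cast_id, Fin.sum_univ_succ] at this
  simp only [attachVertex_adj_succ_zero, attachVertex_adj_succ_succ] at this
  rw [this, add_comm, ← Nat.cast_id (G.degree j), degree_eq_sum_if_adj]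

end AttachVertex

end SimpleGraph

open SimpleGraph

theorem graphic_succ_of_graphic {m : ℕ} (s : Fin (m + 1) → ℕ) (s' : Fin m → ℕ) (h0 : s 0 ≤ m)
    (hs' : ∀ j, s' j + (if (j : ℕ) < s 0 then 1 else 0) = s j.succ) (h : Graphic m s') :
    Graphic (m + 1) s := by
  classical
  obtain ⟨G, _, hG⟩ := h
  refine ⟨G.attachVertex (s 0), inferInstance, Fin.cases ?_ fun j => ?_⟩
  · exact degree_attachVertex_zero G _ h0
  · rw [degree_attachVertex_succ, hG, hs']

theorem connected_graphic_mpr (n : ℕ) (hn : 1 ≤ n) (s : Fin n → ℕ)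
    (hpos : ∀ i, 0 < s i)
    (hmax : s ⟨0, hn⟩ ≤ n - 1)
    (s' : Fin (n - 1) → ℕ)
    (hs' : ∀ j : Fin (n - 1),
      s' j = if j.val + 1 ≤ s ⟨0, hn⟩
             then s ⟨j.val + 1, by omega⟩ - 1
             else s ⟨j.val + 1, by omega⟩) :
    Graphic (n - 1) s' ∧ 2 * (n - 1) ≤ ∑ i, s i → ConnectedGraphic n s := by
  rintro ⟨hs'_graphic, hsum⟩
  obtain ⟨m, rfl⟩ : ∃ m, n = m + 1 := ⟨n - 1, by omega⟩
  have hs_graphic : Graphic (m + 1) s := by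
    refine graphic_succ_of_graphic s s' hmax (fun j => ?_) hs'_graphic
    have hj : s ⟨j + 1, by omega⟩ = s j.succ := rfl
    have h0 : s ⟨0, hn⟩ = s 0 := rfl
    have := hpos j.succ
    rw [hs' j, hj, h0]
    split_ifs <;> omega
  exact exists_connected_degree_eq s hs_graphic hpos (by simpa using hsum)
end
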